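/- Let C(x,y) = Σ_{n≥1} (Σ_{i≥1} c(n,i) y^i) x^n, viewed as a formal power series in x with coefficients in the polynomial ring ℤ[y]. Then (1 - (2 + y + y²)·x + (1 - y)(1 - 2y - y²)·x²) · C(x,y) = 2y(1 + y)·x - 2y(1 - y)(1 - 2y)·x². Equivalently, C(x,y) equals the rational function 2xy(1 + y - x(1 - y)(1 - 2y)) / (1 - x(2 + y + y²) + x²(1 - y)(1 - 5y² - 2y(1 - 2y))). -/

import Mathlib

open SimpleGraph Polynomial

/-- A 2-colored partition of a simple graph `G`: a partition of the vertex set into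
nonempty parts, each inducing a connected subgraph, together with an assignment of one
of two colors to each part such that distinct parts joined by an edge get different colors. -/
structure TwoColoredPartition {V : Type*} (G : SimpleGraph V) where
  parts : Set (Set V)
  nonempty : ∀ p ∈ parts, p.Nonempty
  covers : ∀ v : V, ∃ p, p ∈ parts ∧ v ∈ p
  disj : ∀ p ∈ parts, ∀ q ∈ parts, p ≠ q → Disjoint p q
  conn : ∀ p ∈ parts, (G.induce p).Connected
  color : parts → Fin 2
  proper : ∀ p q : parts, p ≠ q →
    (∃ v ∈ (p : Set V), ∃ w ∈ (q : Set V), G.Adj v w) → color p ≠ color q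

/-- The size of a 2-colored partition: its number of parts. -/
noncomputable def TwoColoredPartition.size {V : Type*} {G : SimpleGraph V}
    (T : TwoColoredPartition G) : ℕ :=
  T.parts.ncard

/-- `c n i` is the number of 2-colored partitions of the `2 × n` grid graph `P₂ × Pₙ` of
size `i`, i.e. the number of tilings of a `2 × n` grid with exactly `i` polyominoes
colored with one of two colors so that adjacent polyominoes get different colors. -/
noncomputable def c (n i : ℕ) : ℕ :=
  Nat.card {T : TwoColoredPartition (pathGraph 2 □ pathGraph n) // T.size = i}

/-- `C(x,y) = ∑_{n ≥ 1} (∑_{i ≥ 1} c(n,i) yⁱ) xⁿ`, a formal power series in `x`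
with coefficients in `ℤ[y]`. -/
noncomputable def Cser : PowerSeries (Polynomial ℤ) :=
  PowerSeries.mk fun n =>
    if n = 0 then 0 else ∑ᶠ (i : ℕ) (_ : 1 ≤ i), Polynomial.monomial i (c n i : ℤ)

/-!
A 2-colored partition is the same thing as a 2-coloring `κ` of the vertices: its parts are the
connected components of the subgraph of monochromatic edges, so `∑ᵢ c(n,i) yⁱ` is the sum of
`y ^ (number of these components)` over all colorings.
Charge each monochromatic component of the `2 × n` grid to its first vertex in column-major order.
Whether a vertex is first can be read off from its own column and the one before, so the sum is
computed by a `4 × 4` transfer matrix indexed by the colors of the last column. By color symmetry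
it collapses to the system `s' = (1 + y) s + 2 d`, `d' = 2 y s + (1 + y²) d` for colorings ending
in a monochromatic (`s`) or bichromatic (`d`) column, whose characteristic polynomial
`t² - (2 + y + y²) t + (1 - y)(1 - 2y - y²)` is the denominator.
-/

namespace SimpleGraph

variable {V α : Type*} {G : SimpleGraph V}

def monoGraph (G : SimpleGraph V) (κ : V → α) : SimpleGraph V where
  Adj v w := G.Adj v w ∧ κ v = κ w
  symm := ⟨fun _ _ h => ⟨h.1.symm, h.2.symm⟩⟩
  loopless := ⟨fun v h => G.loopless.irrefl v h.1⟩

theorem Reachable.mem_of_forall_adj {S : Set V} (hS : ∀ ⦃a b⦄, G.Adj a b → a ∈ S → b ∈ S)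
    {v w : V} (h : G.Reachable v w) (hv : v ∈ S) : w ∈ S := by
  obtain ⟨p⟩ := h
  induction p with
  | nil => exact hv
  | cons hab _ ih => exact ih (hS hab hv)

theorem Reachable.apply_eq_of_forall_adj {β : Type*} {f : V → β}
    (hf : ∀ ⦃a b⦄, G.Adj a b → f a = f b) {v w : V} (h : G.Reachable v w) : f v = f w :=
  h.mem_of_forall_adj (S := {x | f v = f x}) (fun _ _ hab ha => ha.trans (hf hab)) rfl

theorem Reachable.apply_eq_of_monoGraph {κ : V → α} {v w : V}
    (h : (G.monoGraph κ).Reachable v w) : κ v = κ w :=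
  h.apply_eq_of_forall_adj (G := G.monoGraph κ) fun _ _ hab => hab.2

theorem reachable_monoGraph_of_connected_induce {κ : V → α} {s : Set V}
    (hs : (G.induce s).Connected) (hκ : ∀ v ∈ s, ∀ w ∈ s, κ v = κ w) {v w : V}
    (hv : v ∈ s) (hw : w ∈ s) : (G.monoGraph κ).Reachable v w :=
  (hs.preconnected ⟨v, hv⟩ ⟨w, hw⟩).map (G' := G.monoGraph κ)
    ⟨Subtype.val, fun {a b} hab => ⟨hab, hκ _ a.2 _ b.2⟩⟩

theorem connected_induce_supp_monoGraph {κ : V → α}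
    (C : (G.monoGraph κ).ConnectedComponent) : (G.induce C.supp).Connected :=
  C.connected_toSimpleGraph.mono (G := (G.monoGraph κ).induce C.supp) fun _ _ hab => hab.1

def ConnectedComponent.monoColor {κ : V → α} : (G.monoGraph κ).ConnectedComponent → α :=
  ConnectedComponent.lift κ fun _ _ p _ => p.reachable.apply_eq_of_monoGraph

theorem ConnectedComponent.monoColor_eq {κ : V → α} {C : (G.monoGraph κ).ConnectedComponent}
    {v : V} (hv : v ∈ C.supp) : C.monoColor = κ v := by
  rw [← (C.mem_supp_iff v).mp hv]
  rfl

theorem card_connectedComponent_eq_card_min [Finite V] {β : Type*} [LinearOrder β] {f : V → β}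
    (hf : f.Injective) :
    Nat.card G.ConnectedComponent = Nat.card {v // ∀ w, G.Reachable v w → f v ≤ f w} := by
  refine (Nat.card_congr (Equiv.ofBijective (fun v => G.connectedComponentMk v.1) ⟨?_, ?_⟩)).symm
  · rintro ⟨v, hv⟩ ⟨w, hw⟩ h
    have hvw : G.Reachable v w := ConnectedComponent.exact h
    exact Subtype.ext (hf (le_antisymm (hv w hvw) (hw v hvw.symm)))
  · intro C
    obtain ⟨v, hv, hmin⟩ := Set.exists_min_image C.supp f (Set.toFinite _) C.nonempty_supp
    refine ⟨⟨v, fun w hw => hmin w ?_⟩, (C.mem_supp_iff v).mp hv⟩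
    rw [C.mem_supp_iff, ← (C.mem_supp_iff v).mp hv]
    exact ConnectedComponent.sound hw.symm

end SimpleGraph

open Finset in
theorem Polynomial.sum_X_pow_eq_finsum_monomial_card {ι R : Type*} [Fintype ι] [CommSemiring R]
    (g : ι → ℕ) (hg : ∀ a, 1 ≤ g a) :
    ∑ a, (X : R[X]) ^ g a = ∑ᶠ (i : ℕ) (_ : 1 ≤ i), monomial i (Nat.card {a // g a = i} : R) := by
  classical
  have hcard (i : ℕ) : Nat.card {a // g a = i} = #{a | g a = i} := by
    rw [Nat.card_eq_fintype_card, Fintype.card_subtype]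
  simp only [hcard, Finset.sum_comp (fun i => (X : R[X]) ^ i) g, ← C_mul_X_pow_eq_monomial,
    nsmul_eq_mul, map_natCast]
  refine (finsum_cond_eq_sum_of_cond_iff _ fun {i} hi => ?_).symm
  obtain ⟨a, ha⟩ : ({a | g a = i} : Finset ι).Nonempty := by
    rw [← card_ne_zero]
    rintro h
    simp [h] at hi
  obtain rfl := (mem_filter.mp ha).2
  simp [hg a]

theorem Fintype.sum_fun_fin_two {α M : Type*} [Fintype α] [AddCommMonoid M]
    (f : (Fin 2 → α) → M) : ∑ a, f a = ∑ x, ∑ y, f ![x, y] := by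
  rw [← (finTwoArrowEquiv α).symm.sum_comp, Fintype.sum_prod_type]
  rfl

theorem PowerSeries.mul_mk_eq_of_recurrence {R : Type*} [CommRing R] {f : ℕ → R} {a b : R}
    (h : ∀ n, f (n + 2) = a * f (n + 1) - b * f n) :
    (1 - C a * X + C b * X ^ 2) * mk f = C (f 0) + C (f 1 - a * f 0) * X := by
  ext n
  rcases n with _ | _ | n
  · simp
  · simp [sub_mul, add_mul, mul_assoc, coeff_X_pow_mul']
  · simp [sub_mul, add_mul, mul_assoc, coeff_X_pow_mul', h]

namespace TwoColoredPartition

open SimpleGraph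

variable {V : Type*} {G : SimpleGraph V}

theorem ext {T U : TwoColoredPartition G} (hparts : T.parts = U.parts)
    (hcolor : ∀ p (hT : p ∈ T.parts) (hU : p ∈ U.parts), T.color ⟨p, hT⟩ = U.color ⟨p, hU⟩) :
    T = U := by
  obtain ⟨parts, _, _, _, _, color, _⟩ := T
  obtain ⟨_, _, _, _, _, color', _⟩ := U
  subst hparts
  obtain rfl : color = color' := funext fun p => hcolor p p.2 p.2
  rfl

variable (T : TwoColoredPartition G)

noncomputable def partOf (v : V) : Set V := (T.covers v).choose

theorem partOf_mem (v : V) : T.partOf v ∈ T.parts := (T.covers v).choose_spec.1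

theorem mem_partOf (v : V) : v ∈ T.partOf v := (T.covers v).choose_spec.2

theorem eq_partOf {p : Set V} (hp : p ∈ T.parts) {v : V} (hv : v ∈ p) : p = T.partOf v := by
  by_contra hne
  exact Set.disjoint_left.mp (T.disj p hp _ (T.partOf_mem v) hne) hv (T.mem_partOf v)

noncomputable def colorOf (v : V) : Fin 2 := T.color ⟨T.partOf v, T.partOf_mem v⟩

theorem colorOf_eq {p : Set V} (hp : p ∈ T.parts) {v : V} (hv : v ∈ p) :
    T.colorOf v = T.color ⟨p, hp⟩ := by
  simp only [colorOf, ← T.eq_partOf hp hv]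

theorem partOf_eq_of_adj {v w : V} (h : (G.monoGraph T.colorOf).Adj v w) :
    T.partOf v = T.partOf w := by
  by_contra hne
  refine T.proper ⟨_, T.partOf_mem v⟩ ⟨_, T.partOf_mem w⟩ (fun he => hne (congrArg Subtype.val he))
    ⟨v, T.mem_partOf v, w, T.mem_partOf w, h.1⟩ h.2

theorem supp_connectedComponentMk_monoGraph_colorOf (v : V) :
    ((G.monoGraph T.colorOf).connectedComponentMk v).supp = T.partOf v := by
  ext w
  rw [ConnectedComponent.mem_supp_iff, ConnectedComponent.eq]
  constructor
  · intro h
    exact h.apply_eq_of_forall_adj (fun _ _ => T.partOf_eq_of_adj) ▸ T.mem_partOf w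
  · refine fun hw => reachable_monoGraph_of_connected_induce (T.conn _ (T.partOf_mem v)) ?_ hw
      (T.mem_partOf v)
    intro a ha b hb
    rw [T.colorOf_eq (T.partOf_mem v) ha, T.colorOf_eq (T.partOf_mem v) hb]

theorem monoColor_choose {κ : V → Fin 2} {p : Set V}
    (hp : p ∈ Set.range fun C : (G.monoGraph κ).ConnectedComponent => C.supp) {v : V}
    (hv : v ∈ p) : hp.choose.monoColor = κ v :=
  ConnectedComponent.monoColor_eq (by rwa [show hp.choose.supp = p from hp.choose_spec])

noncomputable def ofColoring (κ : V → Fin 2) : TwoColoredPartition G where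
  parts := Set.range fun C : (G.monoGraph κ).ConnectedComponent => C.supp
  nonempty := by
    rintro _ ⟨C, rfl⟩
    exact C.nonempty_supp
  covers v := ⟨_, ⟨_, rfl⟩, ConnectedComponent.connectedComponentMk_mem⟩
  disj := by
    rintro _ ⟨C, rfl⟩ _ ⟨D, rfl⟩ hne
    exact pairwise_disjoint_supp_connectedComponent _ fun h => hne (congrArg _ h)
  conn := by
    rintro _ ⟨C, rfl⟩
    exact connected_induce_supp_monoGraph C
  color p := p.2.choose.monoColor
  proper := by
    rintro ⟨_, hC⟩ ⟨_, hD⟩ hne ⟨v, hv, w, hw, hvw⟩ hcolor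
    obtain ⟨C, rfl⟩ := id hC
    obtain ⟨D, rfl⟩ := id hD
    have hmono : (G.monoGraph κ).Adj v w :=
      ⟨hvw, (monoColor_choose hC hv).symm.trans (hcolor.trans (monoColor_choose hD hw))⟩
    refine hne (Subtype.ext (congrArg ConnectedComponent.supp (?_ : C = D)))
    rw [← (C.mem_supp_iff w).mp (C.mem_supp_of_adj_mem_supp hv hmono), (D.mem_supp_iff w).mp hw]

theorem color_ofColoring {κ : V → Fin 2} {p : Set V} (hp : p ∈ (ofColoring (G := G) κ).parts)
    {v : V} (hv : v ∈ p) : (ofColoring κ).color ⟨p, hp⟩ = κ v :=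
  monoColor_choose hp hv

theorem ofColoring_colorOf (T : TwoColoredPartition G) : ofColoring T.colorOf = T := by
  refine TwoColoredPartition.ext ?_ fun p hp hT => ?_
  · ext p
    constructor
    · rintro ⟨C, rfl⟩
      refine C.ind fun v => ?_
      simpa only [supp_connectedComponentMk_monoGraph_colorOf] using T.partOf_mem v
    · intro hp
      obtain ⟨v, hv⟩ := T.nonempty p hp
      exact ⟨_, (T.supp_connectedComponentMk_monoGraph_colorOf v).trans (T.eq_partOf hp hv).symm⟩
  · obtain ⟨v, hv⟩ := T.nonempty p hT
    rw [color_ofColoring hp hv, T.colorOf_eq hT hv]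

theorem colorOf_ofColoring (κ : V → Fin 2) : (ofColoring (G := G) κ).colorOf = κ :=
  funext fun v => color_ofColoring _ (mem_partOf _ v)

theorem size_ofColoring (κ : V → Fin 2) :
    (ofColoring (G := G) κ).size = Nat.card (G.monoGraph κ).ConnectedComponent :=
  Set.ncard_range_of_injective ConnectedComponent.supp_injective

noncomputable def equivColoring : TwoColoredPartition G ≃ (V → Fin 2) where
  toFun := colorOf
  invFun := ofColoring
  left_inv := ofColoring_colorOf
  right_inv := colorOf_ofColoring

theorem card_size_eq_card_coloring (i : ℕ) :
    Nat.card {T : TwoColoredPartition G // T.size = i} =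
      Nat.card {κ : V → Fin 2 // Nat.card (G.monoGraph κ).ConnectedComponent = i} :=
  Nat.card_congr <| equivColoring.subtypeEquiv fun T => by
    rw [← size_ofColoring, equivColoring, Equiv.coe_fn_mk, ofColoring_colorOf]

theorem finsum_monomial_card_size_eq_sum_coloring [Fintype V] [DecidableEq V] [Nonempty V]
    {R : Type*} [CommSemiring R] :
    ∑ᶠ (i : ℕ) (_ : 1 ≤ i), monomial i (Nat.card {T : TwoColoredPartition G // T.size = i} : R) =
      ∑ κ : V → Fin 2, (X : R[X]) ^ Nat.card (G.monoGraph κ).ConnectedComponent := by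
  simp_rw [card_size_eq_card_coloring]
  exact (sum_X_pow_eq_finsum_monomial_card _ fun _ => Nat.card_pos).symm

end TwoColoredPartition

namespace Ladder

open SimpleGraph Finset

variable {n : ℕ}

theorem adj_iff {v w : Fin 2 × Fin n} :
    (pathGraph 2 □ pathGraph n).Adj v w ↔
      (v.1 ≠ w.1 ∧ v.2 = w.2) ∨ (((v.2 : ℕ) + 1 = w.2 ∨ (w.2 : ℕ) + 1 = v.2) ∧ v.1 = w.1) := by
  simp [boxProd_adj, pathGraph_adj, pathGraph_two_eq_top]

/-- The vertices that come first, in column-major order, in their monochromatic component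
(`isSeed_iff_forall_reachable`), described through their own column and the previous one. -/
def IsSeed (κ : Fin 2 × Fin n → Fin 2) (v : Fin 2 × Fin n) : Prop :=
  (v.1 = 1 → κ (0, v.2) ≠ κ v) ∧
    ∀ (r : Fin 2) (j : Fin n), (j : ℕ) + 1 = v.2 → κ (r, v.2) = κ v → κ (r, j) ≠ κ v

instance (κ : Fin 2 × Fin n → Fin 2) : DecidablePred (IsSeed κ) := fun _ => by
  unfold IsSeed
  infer_instance

def colMajorRank (v : Fin 2 × Fin n) : ℕ := 2 * v.2 + v.1

theorem colMajorRank_injective : (colMajorRank : Fin 2 × Fin n → ℕ).Injective := by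
  rintro ⟨r, j⟩ ⟨r', j'⟩ h
  simp only [colMajorRank] at h
  ext <;> simp <;> omega

variable {κ : Fin 2 × Fin n → Fin 2}

theorem reachable_of_apply_eq {r r' : Fin 2} {j : Fin n} (h : κ (r, j) = κ (r', j)) :
    ((pathGraph 2 □ pathGraph n).monoGraph κ).Reachable (r, j) (r', j) := by
  by_cases hr : r = r'
  · subst hr
    rfl
  · exact Adj.reachable ⟨adj_iff.mpr (Or.inl ⟨hr, rfl⟩), h⟩

/-- A monochromatic walk from a seed never gets left of the seed's column: it could only leave
through a cell of that column with the seed's color, and none of these has a same-colored left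
neighbour. -/
theorem IsSeed.apply_eq_and_le_of_reachable {v w : Fin 2 × Fin n} (hv : IsSeed κ v)
    (hw : ((pathGraph 2 □ pathGraph n).monoGraph κ).Reachable v w) :
    κ w = κ v ∧ (v.2 : ℕ) ≤ w.2 := by
  refine hw.mem_of_forall_adj (S := {x | κ x = κ v ∧ (v.2 : ℕ) ≤ x.2}) ?_ ⟨rfl, le_rfl⟩
  rintro ⟨ra, ja⟩ ⟨rb, jb⟩ ⟨hab, hκab⟩ ⟨ha, hle⟩
  refine ⟨hκab.symm.trans ha, ?_⟩
  dsimp only at hle ⊢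
  rcases adj_iff.mp hab with ⟨-, h⟩ | ⟨h | h, hrr⟩
  · exact (congrArg Fin.val h : (ja : ℕ) = jb) ▸ hle
  · dsimp only at h
    omega
  · dsimp only at h hrr
    by_contra hlt
    obtain rfl : ja = v.2 := Fin.ext (by omega)
    subst hrr
    exact hv.2 ra jb h ha (hκab.symm.trans ha)

theorem isSeed_iff_forall_reachable {v : Fin 2 × Fin n} :
    IsSeed κ v ↔ ∀ w, ((pathGraph 2 □ pathGraph n).monoGraph κ).Reachable v w →
      colMajorRank v ≤ colMajorRank w := by
  obtain ⟨r, j⟩ := v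
  constructor
  · rintro hv ⟨rw, jw⟩ hw
    obtain ⟨hκ, hle⟩ := hv.apply_eq_and_le_of_reachable hw
    simp only [colMajorRank] at hle ⊢
    by_contra hlt
    obtain rfl : jw = j := Fin.ext (by omega)
    obtain rfl : r = 1 := Fin.ext (by omega)
    obtain rfl : rw = 0 := Fin.ext (by omega)
    exact hv.1 rfl hκ
  · intro hmin
    refine ⟨fun hr heq => ?_, fun r' j' hj' hcol hleft => ?_⟩
    · subst hr
      have := hmin (0, j) (reachable_of_apply_eq heq.symm)
      simp [colMajorRank] at this
    · have hadj : ((pathGraph 2 □ pathGraph n).monoGraph κ).Adj (r', j) (r', j') :=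
        ⟨adj_iff.mpr (Or.inr ⟨Or.inr hj', rfl⟩), hcol.trans hleft.symm⟩
      have := hmin (r', j') ((reachable_of_apply_eq hcol.symm).trans hadj.reachable)
      simp only [colMajorRank] at this hj'
      omega

def seedCount (κ : Fin 2 × Fin n → Fin 2) : ℕ := #{v | IsSeed κ v}

theorem card_connectedComponent_monoGraph_eq_seedCount (κ : Fin 2 × Fin n → Fin 2) :
    Nat.card ((pathGraph 2 □ pathGraph n).monoGraph κ).ConnectedComponent = seedCount κ := by
  rw [card_connectedComponent_eq_card_min colMajorRank_injective, seedCount,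
    ← Fintype.card_subtype, ← Nat.card_eq_fintype_card]
  exact Nat.card_congr (Equiv.subtypeEquivRight fun _ => isSeed_iff_forall_reachable.symm)

def snocColumn (κ : Fin 2 × Fin n → Fin 2) (b : Fin 2 → Fin 2) : Fin 2 × Fin (n + 1) → Fin 2 :=
  fun v => Fin.snoc (α := fun _ => Fin 2) (fun j => κ (v.1, j)) (b v.1) v.2

@[simp]
theorem snocColumn_castSucc (κ : Fin 2 × Fin n → Fin 2) (b : Fin 2 → Fin 2) (r : Fin 2)
    (j : Fin n) : snocColumn κ b (r, j.castSucc) = κ (r, j) :=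
  Fin.snoc_castSucc (α := fun _ => Fin 2) ..

@[simp]
theorem snocColumn_last (κ : Fin 2 × Fin n → Fin 2) (b : Fin 2 → Fin 2) (r : Fin 2) :
    snocColumn κ b (r, Fin.last n) = b r :=
  Fin.snoc_last (α := fun _ => Fin 2) ..

def snocColumnEquiv :
    (Fin 2 × Fin n → Fin 2) × (Fin 2 → Fin 2) ≃ (Fin 2 × Fin (n + 1) → Fin 2) where
  toFun p := snocColumn p.1 p.2
  invFun κ := (fun v => κ (v.1, v.2.castSucc), fun r => κ (r, Fin.last n))
  left_inv _ := by ext <;> simp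
  right_inv κ := by
    ext ⟨r, j⟩ : 1
    induction j using Fin.lastCases <;> simp

def lastColumn {m : ℕ} (κ : Fin 2 × Fin (m + 1) → Fin 2) (r : Fin 2) : Fin 2 := κ (r, Fin.last m)

def newSeeds (a b : Fin 2 → Fin 2) : ℕ :=
  #{r | (r = 1 → b 0 ≠ b r) ∧ ∀ r', b r' = b r → a r' ≠ b r}

theorem isSeed_snocColumn_castSucc {κ : Fin 2 × Fin n → Fin 2} {b : Fin 2 → Fin 2} {r : Fin 2}
    {j : Fin n} : IsSeed (snocColumn κ b) (r, j.castSucc) ↔ IsSeed κ (r, j) := by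
  have hj : n + 1 ≠ j := by omega
  simp [IsSeed, Fin.forall_fin_succ', hj]

theorem isSeed_snocColumn_last {m : ℕ} {κ : Fin 2 × Fin (m + 1) → Fin 2} {b : Fin 2 → Fin 2}
    {r : Fin 2} : IsSeed (snocColumn κ b) (r, Fin.last (m + 1)) ↔
      (r = 1 → b 0 ≠ b r) ∧ ∀ r', b r' = b r → lastColumn κ r' ≠ b r := by
  have hm (i : Fin m) : (i : ℕ) ≠ m := i.isLt.ne
  simp [IsSeed, Fin.forall_fin_succ', lastColumn, hm]

theorem seedCount_snocColumn {m : ℕ} (κ : Fin 2 × Fin (m + 1) → Fin 2) (b : Fin 2 → Fin 2) :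
    seedCount (snocColumn κ b) = seedCount κ + newSeeds (lastColumn κ) b := by
  simp only [seedCount, newSeeds, card_filter, Fintype.sum_prod_type,
    Fin.sum_univ_castSucc (n := m + 1), isSeed_snocColumn_castSucc, isSeed_snocColumn_last,
    sum_add_distrib]

theorem seedCount_of_width_one (b : Fin 2 → Fin 2) :
    seedCount (fun v : Fin 2 × Fin 1 => b v.1) = if b 0 = b 1 then 1 else 2 := by
  revert b
  decide

noncomputable def weight (m : ℕ) (b : Fin 2 → Fin 2) : ℤ[X] :=
  ∑ κ : Fin 2 × Fin (m + 1) → Fin 2 with lastColumn κ = b, X ^ seedCount κ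

theorem weight_succ (m : ℕ) (b : Fin 2 → Fin 2) :
    weight (m + 1) b = ∑ a, weight m a * X ^ newSeeds a b := by
  have hlast (κ : Fin 2 × Fin (m + 1) → Fin 2) (c : Fin 2 → Fin 2) :
      lastColumn (snocColumn κ c) = c := funext fun r => snocColumn_last κ c r
  calc weight (m + 1) b
      = ∑ κ : Fin 2 × Fin (m + 1) → Fin 2, X ^ (seedCount κ + newSeeds (lastColumn κ) b) := by
        rw [weight, sum_filter, ← snocColumnEquiv.sum_comp, Fintype.sum_prod_type]
        simp [snocColumnEquiv, hlast, seedCount_snocColumn]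
    _ = ∑ a, ∑ κ : Fin 2 × Fin (m + 1) → Fin 2 with lastColumn κ = a,
          X ^ seedCount κ * X ^ newSeeds a b := by
        rw [← sum_fiberwise _ lastColumn]
        refine sum_congr rfl fun a _ => sum_congr rfl fun κ hκ => ?_
        rw [(mem_filter.mp hκ).2, pow_add]
    _ = ∑ a, weight m a * X ^ newSeeds a b := by
        simp only [weight, sum_mul]

theorem weight_zero (b : Fin 2 → Fin 2) : weight 0 b = if b 0 = b 1 then X else X ^ 2 := by
  have hb : (fun v : Fin 2 × Fin 1 => b v.1) ∈ ({κ | lastColumn κ = b} : Finset _) :=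
    mem_filter.mpr ⟨mem_univ _, rfl⟩
  rw [weight, sum_eq_single_of_mem _ hb fun κ hκ hne => ?_, seedCount_of_width_one]
  · split_ifs <;> simp
  · refine absurd (_root_.funext fun v => ?_) hne
    obtain ⟨r, j⟩ := v
    obtain rfl := Subsingleton.elim j (Fin.last 0)
    exact congrFun (mem_filter.mp hκ).2 r

noncomputable def sameWeight (m : ℕ) : ℤ[X] := weight m ![0, 0] + weight m ![1, 1]

noncomputable def diffWeight (m : ℕ) : ℤ[X] := weight m ![0, 1] + weight m ![1, 0]

theorem sameWeight_succ (m : ℕ) :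
    sameWeight (m + 1) = (1 + X) * sameWeight m + 2 * diffWeight m := by
  simp only [sameWeight, diffWeight, weight_succ, Fintype.sum_fun_fin_two, Fin.sum_univ_two]
  simp [newSeeds, card_filter, Fin.sum_univ_two, Fin.forall_fin_two, -sum_boole]
  ring

theorem diffWeight_succ (m : ℕ) :
    diffWeight (m + 1) = 2 * X * sameWeight m + (1 + X ^ 2) * diffWeight m := by
  simp only [sameWeight, diffWeight, weight_succ, Fintype.sum_fun_fin_two, Fin.sum_univ_two]
  simp [newSeeds, card_filter, Fin.sum_univ_two, Fin.forall_fin_two, -sum_boole]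
  ring

noncomputable def totalWeight (m : ℕ) : ℤ[X] :=
  ∑ κ : Fin 2 × Fin (m + 1) → Fin 2, X ^ seedCount κ

theorem totalWeight_eq (m : ℕ) : totalWeight m = sameWeight m + diffWeight m := by
  rw [totalWeight, ← sum_fiberwise _ lastColumn, Fintype.sum_fun_fin_two]
  simp only [Fin.sum_univ_two, sameWeight, diffWeight, weight]
  abel

theorem totalWeight_add_two (m : ℕ) :
    totalWeight (m + 2) = (2 + X + X ^ 2) * totalWeight (m + 1) -
      (1 - X) * (1 - 2 * X - X ^ 2) * totalWeight m := by
  simp only [totalWeight_eq, sameWeight_succ, diffWeight_succ]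
  ring

theorem totalWeight_zero : totalWeight 0 = 2 * X * (1 + X) := by
  simp [totalWeight_eq, sameWeight, diffWeight, weight_zero]
  ring

theorem totalWeight_one : totalWeight 1 = 2 * X + 12 * X ^ 2 + 2 * X ^ 4 := by
  simp only [totalWeight_eq, sameWeight_succ, diffWeight_succ]
  simp [sameWeight, diffWeight, weight_zero]
  ring

theorem coeff_Cser_succ (m : ℕ) : PowerSeries.coeff (m + 1) Cser = totalWeight m := by
  rw [Cser, PowerSeries.coeff_mk, if_neg m.succ_ne_zero]
  simp only [c, TwoColoredPartition.finsum_monomial_card_size_eq_sum_coloring,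
    card_connectedComponent_monoGraph_eq_seedCount, totalWeight]

theorem Cser_eq : Cser = PowerSeries.X * PowerSeries.mk totalWeight := by
  ext (_ | m)
  · simp [Cser]
  · rw [PowerSeries.coeff_succ_X_mul, PowerSeries.coeff_mk, coeff_Cser_succ]

end Ladder

/-- `(1 - (2 + y + y²)x + (1 - y)(1 - 2y - y²)x²) · C(x,y)
      = 2y(1 + y)·x - 2y(1 - y)(1 - 2y)·x²`. -/
theorem genfun_grid_2xn :
    (1 - PowerSeries.C (R := Polynomial ℤ) (2 + Polynomial.X + Polynomial.X ^ 2) * PowerSeries.X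
        + PowerSeries.C (R := Polynomial ℤ) ((1 - Polynomial.X) * (1 - 2 * Polynomial.X
            - Polynomial.X ^ 2)) * PowerSeries.X ^ 2) * Cser
      = PowerSeries.C (R := Polynomial ℤ) (2 * Polynomial.X * (1 + Polynomial.X)) * PowerSeries.X
        - PowerSeries.C (R := Polynomial ℤ) (2 * Polynomial.X * (1 - Polynomial.X)
            * (1 - 2 * Polynomial.X)) * PowerSeries.X ^ 2 := by
  have hrec := PowerSeries.mul_mk_eq_of_recurrence Ladder.totalWeight_add_two
  have h₁ : Ladder.totalWeight 1 - (2 + X + X ^ 2) * Ladder.totalWeight 0 =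
      -(2 * X * (1 - X) * (1 - 2 * X)) := by
    rw [Ladder.totalWeight_zero, Ladder.totalWeight_one]
    ring
  rw [Ladder.Cser_eq, mul_left_comm, hrec, h₁, Ladder.totalWeight_zero, map_neg]
  ring
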